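/- arXiv:1202.6575 — 5 statements merged into one kernel-verified Lean document; each statement's English description precedes it below -/
import Mathlib

section
/- (Observation, first part) Let A : Fin n → α and B : Fin m → α be monotone (non-decreasing) sequences in a linear order α. Let i : Fin n, a = A i, and j = rankLow(a, B). Then for every index j' : Fin m with j' < j, the cross rank of B j' in A is not after i, i.e., rankHigh(B j', A) ≤ i. -/
/-- `rankLow x B` is the number of elements of `B` that are strictly less than `x`. -/
def rankLow {α : Type*} [LinearOrder α] {m : ℕ} (x : α) (B : Fin m → α) : ℕ :=
  (Finset.univ.filter fun j => B j < x).card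

/-- `rankHigh x A` is the number of elements of `A` that are less than or equal to `x`. -/
def rankHigh {α : Type*} [LinearOrder α] {n : ℕ} (x : α) (A : Fin n → α) : ℕ :=
  (Finset.univ.filter fun i => A i ≤ x).card

/-! Both ranks count a downward-closed set of indices of a monotone sequence, so each is at most
any index outside that set. Hence `j' < rankLow (A i) B` forces `B j' < A i`, and then every
`k` with `A k ≤ B j'` satisfies `k < i`. -/

theorem Fin.card_filter_le_of_antitone_of_not {n : ℕ} {p : Fin n → Prop} [DecidablePred p]
    (hp : Antitone p) {i : Fin n} (hi : ¬ p i) : (Finset.univ.filter p).card ≤ i := by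
  have hsub : Finset.univ.filter p ⊆ Finset.Iio i := by
    intro k hk
    rw [Finset.mem_filter] at hk
    rw [Finset.mem_Iio]
    by_contra! hik
    exact hi (hp hik hk.2)
  simpa only [Fin.card_Iio] using Finset.card_le_card hsub

section

variable {α : Type*} [LinearOrder α]

theorem lt_of_lt_rankLow {m : ℕ} {B : Fin m → α} (hB : Monotone B) {x : α} {j : Fin m}
    (hj : (j : ℕ) < rankLow x B) : B j < x := by
  by_contra! hxj
  exact hj.not_ge <| Fin.card_filter_le_of_antitone_of_not
    (p := fun k => B k < x) (fun _ _ hkl hl => (hB hkl).trans_lt hl) hxj.not_gt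

theorem rankHigh_le_of_lt {n : ℕ} {A : Fin n → α} (hA : Monotone A) {y : α} {i : Fin n}
    (hyi : y < A i) : rankHigh y A ≤ i :=
  Fin.card_filter_le_of_antitone_of_not (p := fun k => A k ≤ y)
    (fun _ _ hkl hl => (hA hkl).trans hl) hyi.not_ge

end

/-- Observation, first part: if `j = rankLow (A i) B` is the cross rank of `A i` in `B`,
then every element of `B` before position `j` has cross rank in `A` not after `i`. -/
theorem crossRank_before {α : Type*} [LinearOrder α] {n m : ℕ}
    (A : Fin n → α) (B : Fin m → α) (hA : Monotone A) (hB : Monotone B)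
    (i : Fin n) :
    ∀ j' : Fin m, (j' : ℕ) < rankLow (A i) B → rankHigh (B j') A ≤ (i : ℕ) :=
  fun _ hj' => rankHigh_le_of_lt hA (lt_of_lt_rankLow hB hj')
end

section
/- Let A : Fin n → α and B : Fin m → α be monotone (non-decreasing) sequences in a linear order α. Then for all i : Fin n and j : Fin m, the output positions are distinct: i + rankLow(A i, B) ≠ j + rankHigh(B j, A). -/
/-- The stable-merge output positions of elements of `A` and of `B` are distinct. -/
theorem pos_ne {α : Type*} [LinearOrder α] {n m : ℕ}
    (A : Fin n → α) (B : Fin m → α) (hA : Monotone A) (hB : Monotone B) :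
    ∀ (i : Fin n) (j : Fin m),
      (i : ℕ) + rankLow (A i) B ≠ (j : ℕ) + rankHigh (B j) A := by
  intro i j h
  rcases le_or_gt (A i) (B j) with hle | hlt
  · -- rankLow (A i) B ≤ j, rankHigh (B j) A ≥ i + 1
    have h1 : rankLow (A i) B ≤ (j : ℕ) := by
      have hsub : (Finset.univ.filter fun k : Fin m => B k < A i) ⊆ Finset.Iio j := by
        intro k hk
        simp only [Finset.mem_filter] at hk
        simp only [Finset.mem_Iio]
        by_contra hkj
        exact absurd (le_trans hle (hB (not_lt.mp hkj))) (not_le.mpr hk.2)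
      calc rankLow (A i) B ≤ (Finset.Iio j).card := Finset.card_le_card hsub
        _ = (j : ℕ) := by simp
    have h2 : (i : ℕ) + 1 ≤ rankHigh (B j) A := by
      have hsub : Finset.Iic i ⊆ (Finset.univ.filter fun k : Fin n => A k ≤ B j) := by
        intro k hk
        simp only [Finset.mem_Iic] at hk
        simp only [Finset.mem_filter, Finset.mem_univ, true_and]
        exact le_trans (hA hk) hle
      calc (i : ℕ) + 1 = (Finset.Iic i).card := by simp
        _ ≤ rankHigh (B j) A := Finset.card_le_card hsub
    omega
  · -- rankLow (A i) B ≥ j + 1, rankHigh (B j) A ≤ i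
    have h1 : (j : ℕ) + 1 ≤ rankLow (A i) B := by
      have hsub : Finset.Iic j ⊆ (Finset.univ.filter fun k : Fin m => B k < A i) := by
        intro k hk
        simp only [Finset.mem_Iic] at hk
        simp only [Finset.mem_filter, Finset.mem_univ, true_and]
        exact lt_of_le_of_lt (hB hk) hlt
      calc (j : ℕ) + 1 = (Finset.Iic j).card := by simp
        _ ≤ rankLow (A i) B := Finset.card_le_card hsub
    have h2 : rankHigh (B j) A ≤ (i : ℕ) := by
      have hsub : (Finset.univ.filter fun k : Fin n => A k ≤ B j) ⊆ Finset.Iio i := by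
        intro k hk
        simp only [Finset.mem_filter] at hk
        simp only [Finset.mem_Iio]
        by_contra hki
        exact absurd (le_trans (hA (not_lt.mp hki)) hk.2) (not_le.mpr hlt)
      calc rankHigh (B j) A ≤ (Finset.Iio i).card := Finset.card_le_card hsub
        _ = (i : ℕ) := by simp
    omega
end

section
/- Let A : Fin n → α and B : Fin m → α be monotone (non-decreasing) sequences in a linear order α. Then the map φ : Fin n ⊕ Fin m → Fin (n + m) defined by φ(inl i) = i + rankLow(A i, B) and φ(inr j) = j + rankHigh(B j, A) is a bijection. (This establishes that the stable-merge output positions of the elements of A and B exactly fill the output array of length n + m.) -/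
/-- The map sending `i : Fin n` to output position `i + rankLow (A i) B` and
`j : Fin m` to output position `j + rankHigh (B j) A` is a bijection
`Fin n ⊕ Fin m → Fin (n + m)`: the stable-merge output positions exactly fill
the output array. -/
theorem pos_bijective {α : Type*} [LinearOrder α] {n m : ℕ}
    (A : Fin n → α) (B : Fin m → α) (hA : Monotone A) (hB : Monotone B)
    (φ : Fin n ⊕ Fin m → Fin (n + m))
    (hφA : ∀ i : Fin n, (φ (Sum.inl i) : ℕ) = (i : ℕ) + rankLow (A i) B)
    (hφB : ∀ j : Fin m, (φ (Sum.inr j) : ℕ) = (j : ℕ) + rankHigh (B j) A) :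
    Function.Bijective φ := by
  have hLmono : ∀ x y : α, x ≤ y → rankLow x B ≤ rankLow y B := by
    intro x y h
    apply Finset.card_le_card
    intro j hj
    simp only [Finset.mem_filter, Finset.mem_univ, true_and] at *
    exact lt_of_lt_of_le hj h
  have hHmono : ∀ x y : α, x ≤ y → rankHigh x A ≤ rankHigh y A := by
    intro x y h
    apply Finset.card_le_card
    intro j hj
    simp only [Finset.mem_filter, Finset.mem_univ, true_and] at *
    exact le_trans hj h
  have cross : ∀ (i : Fin n) (j : Fin m),
      (i : ℕ) + rankLow (A i) B ≠ (j : ℕ) + rankHigh (B j) A := by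
    intro i j heq
    rcases le_or_gt (A i) (B j) with h | h
    · -- rankHigh (B j) A ≥ i+1, rankLow (A i) B ≤ j
      have h1 : (i : ℕ) + 1 ≤ rankHigh (B j) A := by
        have hsub : Finset.Iic i ⊆ Finset.univ.filter fun k => A k ≤ B j := by
          intro k hk
          simp only [Finset.mem_Iic] at hk
          simp only [Finset.mem_filter, Finset.mem_univ, true_and]
          exact le_trans (hA hk) h
        calc (i : ℕ) + 1 = (Finset.Iic i).card := by
              rw [Fin.card_Iic]
          _ ≤ _ := Finset.card_le_card hsub
      have h2 : rankLow (A i) B ≤ (j : ℕ) := by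
        have hsub : (Finset.univ.filter fun k => B k < A i) ⊆ Finset.Iio j := by
          intro k hk
          simp only [Finset.mem_filter, Finset.mem_univ, true_and] at hk
          simp only [Finset.mem_Iio]
          by_contra hc
          push_neg at hc
          exact absurd (lt_of_lt_of_le hk h) (not_lt.mpr (hB hc))
        calc rankLow (A i) B ≤ (Finset.Iio j).card := Finset.card_le_card hsub
          _ = (j : ℕ) := Fin.card_Iio j
      omega
    · -- rankLow (A i) B ≥ j+1, rankHigh (B j) A ≤ i
      have h1 : (j : ℕ) + 1 ≤ rankLow (A i) B := by
        have hsub : Finset.Iic j ⊆ Finset.univ.filter fun k => B k < A i := by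
          intro k hk
          simp only [Finset.mem_Iic] at hk
          simp only [Finset.mem_filter, Finset.mem_univ, true_and]
          exact lt_of_le_of_lt (hB hk) h
        calc (j : ℕ) + 1 = (Finset.Iic j).card := by rw [Fin.card_Iic]
          _ ≤ _ := Finset.card_le_card hsub
      have h2 : rankHigh (B j) A ≤ (i : ℕ) := by
        have hsub : (Finset.univ.filter fun k => A k ≤ B j) ⊆ Finset.Iio i := by
          intro k hk
          simp only [Finset.mem_filter, Finset.mem_univ, true_and] at hk
          simp only [Finset.mem_Iio]
          by_contra hc
          push_neg at hc
          exact absurd (lt_of_le_of_lt hk h) (not_lt.mpr (hA hc))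
        calc rankHigh (B j) A ≤ (Finset.Iio i).card := Finset.card_le_card hsub
          _ = (i : ℕ) := Fin.card_Iio i
      omega
  have hinj : Function.Injective φ := by
    intro a b hab
    have hval : (φ a : ℕ) = (φ b : ℕ) := by rw [hab]
    match a, b with
    | Sum.inl i, Sum.inl i' =>
      rw [hφA, hφA] at hval
      rcases lt_trichotomy i i' with h | h | h
      · have := hLmono (A i) (A i') (hA h.le)
        have : (i : ℕ) < (i' : ℕ) := h
        omega
      · rw [h]
      · have := hLmono (A i') (A i) (hA h.le)
        have : (i' : ℕ) < (i : ℕ) := h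
        omega
    | Sum.inl i, Sum.inr j =>
      rw [hφA, hφB] at hval
      exact absurd hval (cross i j)
    | Sum.inr j, Sum.inl i =>
      rw [hφB, hφA] at hval
      exact absurd hval.symm (cross i j)
    | Sum.inr j, Sum.inr j' =>
      rw [hφB, hφB] at hval
      rcases lt_trichotomy j j' with h | h | h
      · have := hHmono (B j) (B j') (hB h.le)
        have : (j : ℕ) < (j' : ℕ) := h
        omega
      · rw [h]
      · have := hHmono (B j') (B j) (hB h.le)
        have : (j' : ℕ) < (j : ℕ) := h
        omega
  rw [Fintype.bijective_iff_injective_and_card]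
  exact ⟨hinj, by simp⟩
end

section
/- (Stability) Let A : Fin n → α and B : Fin m → α be monotone (non-decreasing) sequences in a linear order α. If A i ≤ B j for some i : Fin n and j : Fin m, then the output position of A i precedes the output position of B j: i + rankLow(A i, B) < j + rankHigh(B j, A). In particular, every element of A equal to some element of B is placed before that element of B in the merged output. -/
/-- Stability: if `A i ≤ B j` then the output position of `A i` precedes the output
position of `B j`; in particular equal elements of `A` are placed before the equal
elements of `B` in the merged output. -/
theorem merge_stable {α : Type*} [LinearOrder α] {n m : ℕ}
    (A : Fin n → α) (B : Fin m → α) (hA : Monotone A) (hB : Monotone B)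
    (i : Fin n) (j : Fin m) (h : A i ≤ B j) :
    (i : ℕ) + rankLow (A i) B < (j : ℕ) + rankHigh (B j) A := by
  have h1 : rankLow (A i) B ≤ (j : ℕ) := by
    have : (Finset.univ.filter fun j' => B j' < A i) ⊆ Finset.Iio j := by
      intro j' hj'
      simp only [Finset.mem_filter] at hj'
      simp only [Finset.mem_Iio]
      by_contra hc
      exact absurd (hB (not_lt.mp hc)) (not_le.mpr (lt_of_lt_of_le hj'.2 h))
    calc rankLow (A i) B ≤ (Finset.Iio j).card := Finset.card_le_card this
      _ = (j : ℕ) := Fin.card_Iio j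
  have h2 : (i : ℕ) + 1 ≤ rankHigh (B j) A := by
    have : Finset.Iic i ⊆ Finset.univ.filter fun i' => A i' ≤ B j := by
      intro i' hi'
      simp only [Finset.mem_Iic] at hi'
      simp only [Finset.mem_filter, Finset.mem_univ, true_and]
      exact le_trans (hA hi') h
    calc (i : ℕ) + 1 = (Finset.Iic i).card := (Fin.card_Iic i).symm
      _ ≤ _ := Finset.card_le_card this
  omega
end

section
/- Let A : Fin n → α and B : Fin m → α be monotone (non-decreasing) sequences in a linear order α, and let 0 < p ≤ min(n, m). Let x_0, …, x_p be the block start indices of A (blocks of size ⌈n/p⌉ or ⌊n/p⌋) and y_0, …, y_p the block start indices of B (blocks of size ⌈m/p⌉ or ⌊m/p⌋), and set x̄_i = rankLow(A x_i, B) for i < p and x̄_p = m. If for some i < p and j < p both cross ranks x̄_i and x̄_{i+1} lie in block j of B (i.e., y_j ≤ x̄_i and x̄_{i+1} ≤ y_{j+1}), then the corresponding merge subproblem has at most ⌈n/p⌉ + ⌈m/p⌉ elements: (x_{i+1} − x_i) + (x̄_{i+1} − x̄_i) ≤ ⌈n/p⌉ + ⌈m/p⌉. -/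
/-- Each block of an `n`-element array split into `p` blocks has size at most `⌈n/p⌉`. -/
lemma block_diff_le (n p : ℕ) (hp : 0 < p) (hpn : p ≤ n) (x : ℕ → ℕ)
    (hxlo : ∀ i, i < n % p → x i = i * ((n + p - 1) / p))
    (hxhi : ∀ i, n % p ≤ i → i ≤ p → x i = i * (n / p) + n % p)
    (i : ℕ) (hi : i < p) : x (i + 1) - x i ≤ (n + p - 1) / p := by
  have hC1 : n / p ≤ (n + p - 1) / p := Nat.div_le_div_right (by omega)
  have hC2 : 0 < n % p → n / p + 1 ≤ (n + p - 1) / p := by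
    intro hr
    rw [Nat.le_div_iff_mul_le hp]
    have h := Nat.div_add_mod n p
    have e : (n / p + 1) * p = p * (n / p) + p := by ring
    rw [e]; omega
  rcases lt_trichotomy (i + 1) (n % p) with h1 | h1 | h1
  · rw [hxlo _ h1, hxlo _ (by omega)]
    have e : (i + 1) * ((n + p - 1) / p) = i * ((n + p - 1) / p) + (n + p - 1) / p := by ring
    generalize (n + p - 1) / p = C at e ⊢
    generalize (i + 1) * C = a at e ⊢
    generalize i * C = b at e ⊢
    omega
  · rw [hxhi (i + 1) (by omega) (by omega), hxlo i (by omega)]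
    have hr : 0 < n % p := by omega
    have hC := hC2 hr
    have e1 : (i + 1) * (n / p) = i * (n / p) + n / p := by ring
    have e2 : i * (n / p) + i ≤ i * ((n + p - 1) / p) := by
      calc i * (n / p) + i = i * (n / p + 1) := by ring
      _ ≤ i * ((n + p - 1) / p) := Nat.mul_le_mul_left i hC
    generalize hq : n / p = q at hC e1 e2 ⊢
    generalize (n + p - 1) / p = C at hC e2 ⊢
    generalize (i + 1) * q = a at e1 ⊢
    generalize i * q = b at e1 e2 ⊢
    generalize i * C = c at e2 ⊢
    omega
  · rw [hxhi (i + 1) (by omega) (by omega), hxhi i (by omega) (by omega)]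
    have e : (i + 1) * (n / p) = i * (n / p) + n / p := by ring
    generalize n / p = q at hC1 e ⊢
    generalize (n + p - 1) / p = C at hC1 ⊢
    generalize (i + 1) * q = a at e ⊢
    generalize i * q = b at e ⊢
    omega

/-- If both cross ranks `x̄ i` and `x̄ (i+1)` of consecutive block starts of `A` lie in
block `j` of `B`, then the corresponding merge subproblem has at most
`⌈n/p⌉ + ⌈m/p⌉` elements. -/
theorem merge_subproblem_size {α : Type*} [LinearOrder α] {n m : ℕ}
    (A : Fin n → α) (B : Fin m → α) (hA : Monotone A) (hB : Monotone B)
    (p : ℕ) (hp : 0 < p) (hpn : p ≤ n) (hpm : p ≤ m)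
    (x y xbar : ℕ → ℕ)
    (hxlo : ∀ i, i < n % p → x i = i * ((n + p - 1) / p))
    (hxhi : ∀ i, n % p ≤ i → i ≤ p → x i = i * (n / p) + n % p)
    (hylo : ∀ j, j < m % p → y j = j * ((m + p - 1) / p))
    (hyhi : ∀ j, m % p ≤ j → j ≤ p → y j = j * (m / p) + m % p)
    (hxbar : ∀ i, i < p → ∀ hi : x i < n, xbar i = rankLow (A ⟨x i, hi⟩) B)
    (hxbarp : xbar p = m) :
    ∀ i j, i < p → j < p →
      y j ≤ xbar i → xbar (i + 1) ≤ y (j + 1) →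
      (x (i + 1) - x i) + (xbar (i + 1) - xbar i) ≤
        (n + p - 1) / p + (m + p - 1) / p := by
  intro i j hi hj h1 h2
  have hx := block_diff_le n p hp hpn x hxlo hxhi i hi
  have hy := block_diff_le m p hp hpm y hylo hyhi j hj
  omega
end
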